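/- Let G = (V, E) be a finite multigraph with interaction φ : E → ℝ, and let θ ∈ ℝ. Place a qubit ℂ² at each vertex, and for each edge ε = {u,v} let X_u X_v denote the tensor product of the Pauli X operator on qubits u and v with the identity elsewhere on (ℂ²)^{⊗V}. Then ⟨0^{|V|}| Π_{ε={u,v}∈E} exp(−iθ φ(ε) X_u X_v) |0^{|V|}⟩ = 2^{−|V|} Σ_{σ ∈ {−1,+1}^V} Π_{{u,v}∈E} e^{−iθ φ({u,v}) σ_u σ_v} = Z_Ising(G; iθ). (All the operators X_u X_v commute, so the order of the product is immaterial.) -/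

import Mathlib

open scoped Classical Matrix

namespace Stmt11

variable {V Eg : Type*}

/-- The spin `±1` associated to a Boolean configuration value. -/
def spin (b : Bool) : ℝ := if b then 1 else -1

/-- The product `σ_u σ_v` of the spins at the two endpoints of an (unordered) edge. -/
def spinProd (σ : V → Bool) : Sym2 V → ℝ :=
  Sym2.lift ⟨fun u v => spin (σ u) * spin (σ v), fun _ _ => mul_comm _ _⟩

/-- The normalized Ising partition function
`Z_Ising(G;β) = 2^{−|V|} Σ_{σ ∈ {−1,+1}^V} Π_{ε={u,v} ∈ E} e^{−β φ(ε) σ_u σ_v}`. -/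
noncomputable def Zising [Fintype V] [Fintype Eg]
    (ends : Eg → Sym2 V) (φ : Eg → ℝ) (β : ℂ) : ℂ :=
  (2 : ℂ) ^ (-(Fintype.card V : ℤ)) *
    ∑ σ : V → Bool, ∏ e : Eg, Complex.exp (-β * (φ e : ℂ) * (spinProd σ (ends e) : ℝ))

/-- The operator `X_u X_v` on `(ℂ²)^{⊗V}`: the tensor product of the Pauli `X`
operator on the two (distinct) endpoints `u, v` of the edge with the identity
elsewhere.  Its matrix entry at `(x, y)` is `1` if `y` agrees with `x` off the edge
and differs from `x` at both endpoints, and `0` otherwise. -/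
noncomputable def pauliXX (e : Sym2 V) : Matrix (V → Bool) (V → Bool) ℂ :=
  fun x y => if (∀ w, w ∉ e → x w = y w) ∧ (∀ w ∈ e, x w ≠ y w) then 1 else 0

/-- The ordered product of matrices over a finite (linearly ordered) edge set. -/
noncomputable def oprod [LinearOrder Eg] {n : Type*} [Fintype n] [DecidableEq n]
    (S : Finset Eg) (f : Eg → Matrix n n ℂ) : Matrix n n ℂ :=
  ((S.sort (· ≤ ·)).map f).prod

/-!
The operators `X_u X_v` are diagonalised simultaneously by the Hadamard transform
`H x σ = (-1)^{|x ∩ σ|}` on `(ℂ²)^{⊗V}` (subsets of `V` encoded as `V → Bool`): conjugating the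
diagonal operator of the Walsh character `σ ↦ (-1)^{|t ∩ σ|}` by `H` gives `2^{|V|}` times the
translation by `t`, and for `t = 1_{u,v}` that character is `σ_u σ_v` while the translation is
`X_u X_v`. Hence the product of exponentials is `H · diag(σ ↦ ∏ e^{-iθφσ_uσ_v}) · H⁻¹`, and as
`H⁻¹ = 2^{-|V|} H` and `H` is all ones in the row and column of `0^V`, its corner entry is the
average of that diagonal over `σ`.
-/

lemma list_prod_map_units_conj {M ι : Type*} [Monoid M] (u : Mˣ) (l : List ι) (f : ι → M) :
    (l.map fun i => u * f i * ↑u⁻¹).prod = u * (l.map f).prod * ↑u⁻¹ := by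
  simpa [Function.comp_def, ConjAct.units_smul_def] using
    (map_list_prod (MulDistribMulAction.toMonoidHom M (ConjAct.toConjAct u)) (l.map f)).symm

lemma list_prod_map_sort {M ι : Type*} [CommMonoid M] (s : Finset ι) (r : ι → ι → Prop)
    [DecidableRel r] [IsTrans ι r] [Std.Antisymm r] [Std.Total r] (f : ι → M) :
    ((s.sort r).map f).prod = ∏ i ∈ s, f i := by
  rw [Finset.prod, ← Finset.sort_eq s r, Multiset.map_coe, Multiset.prod_coe]

def boolSign (b : Bool) : ℂ := if b then -1 else 1

lemma boolSign_xor (a b : Bool) : boolSign (xor a b) = boolSign a * boolSign b := by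
  cases a <;> cases b <;> simp [boolSign]

lemma sum_boolSign_and (a : Bool) : ∑ b, boolSign (a && b) = if a then 0 else 2 := by
  cases a <;> norm_num [boolSign, Fintype.sum_bool]

lemma spin_eq_neg_boolSign (b : Bool) : (spin b : ℂ) = -boolSign b := by
  cases b <;> simp [spin, boolSign]

section Hadamard

variable [Fintype V]

def walsh (t σ : V → Bool) : ℂ := ∏ v, boolSign (t v && σ v)

lemma walsh_comm (t σ : V → Bool) : walsh t σ = walsh σ t := by
  simp only [walsh, Bool.and_comm]

lemma walsh_mul_walsh (s t σ : V → Bool) :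
    walsh s σ * walsh t σ = walsh (fun v => xor (s v) (t v)) σ := by
  simp only [walsh, ← Finset.prod_mul_distrib, ← boolSign_xor, Bool.and_xor_distrib_right]

lemma walsh_false (σ : V → Bool) : walsh (fun _ => false) σ = 1 := by
  simp [walsh, boolSign]

lemma sum_walsh (t : V → Bool) :
    ∑ σ, walsh t σ = if t = (fun _ => false) then 2 ^ Fintype.card V else 0 := by
  simp only [walsh]
  rw [← Fintype.prod_sum (fun v b => boolSign (t v && b))]
  simp only [sum_boolSign_and]
  split_ifs with ht
  · simp [ht]
  · obtain ⟨v, hv⟩ : ∃ v, t v = true := by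
      by_contra! h
      exact ht (funext fun v => by simpa using h v)
    exact Finset.prod_eq_zero (Finset.mem_univ v) (by simp [hv])

def hadamard : Matrix (V → Bool) (V → Bool) ℂ := Matrix.of walsh

lemma hadamard_mul_diagonal_walsh_mul_hadamard (t : V → Bool) :
    hadamard * Matrix.diagonal (walsh t) * hadamard =
      (2 ^ Fintype.card V : ℂ) •
        Matrix.of fun x y => if (fun v => xor (x v) (y v)) = t then 1 else 0 := by
  ext x y
  have hxor : (fun v => xor (xor (x v) (t v)) (y v)) = (fun _ => false) ↔
      (fun v => xor (x v) (y v)) = t := by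
    simp only [funext_iff]
    refine forall_congr' fun v => ?_
    cases x v <;> cases y v <;> cases t v <;> decide
  rw [Matrix.mul_apply]
  simp only [Matrix.mul_diagonal, hadamard, Matrix.of_apply]
  simp only [walsh_comm _ y, walsh_mul_walsh]
  rw [sum_walsh]
  simp only [hxor, Matrix.smul_apply, Matrix.of_apply, smul_eq_mul, mul_ite, mul_one, mul_zero]

lemma hadamard_mul_hadamard :
    (hadamard : Matrix (V → Bool) (V → Bool) ℂ) * hadamard =
      (2 ^ Fintype.card V : ℂ) • 1 := by
  have hdiag : Matrix.diagonal (walsh (V := V) fun _ => false) = 1 := by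
    rw [funext walsh_false]; exact Matrix.diagonal_one
  have htrans : (Matrix.of fun x y : V → Bool =>
      if (fun v => xor (x v) (y v)) = (fun _ => false) then (1 : ℂ) else 0) = 1 := by
    ext x y
    simp [Matrix.one_apply, funext_iff]
  simpa [hdiag, htrans] using hadamard_mul_diagonal_walsh_mul_hadamard (V := V) fun _ => false

lemma two_pow_card_ne_zero : (2 ^ Fintype.card V : ℂ) ≠ 0 := pow_ne_zero _ two_ne_zero

noncomputable def hadamardUnit (V : Type*) [Fintype V] : (Matrix (V → Bool) (V → Bool) ℂ)ˣ where
  val := hadamard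
  inv := (2 ^ Fintype.card V : ℂ)⁻¹ • hadamard
  val_inv := by
    rw [Matrix.mul_smul, hadamard_mul_hadamard, smul_smul, inv_mul_cancel₀ two_pow_card_ne_zero,
      one_smul]
  inv_val := by
    rw [Matrix.smul_mul, hadamard_mul_hadamard, smul_smul, inv_mul_cancel₀ two_pow_card_ne_zero,
      one_smul]

lemma hadamardUnit_conj_diagonal_apply_false (d : (V → Bool) → ℂ) :
    ((hadamardUnit V : Matrix (V → Bool) (V → Bool) ℂ) * Matrix.diagonal d *
        (↑(hadamardUnit V)⁻¹ : Matrix (V → Bool) (V → Bool) ℂ))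
        (fun _ => false) (fun _ => false) =
      (2 : ℂ) ^ (-(Fintype.card V : ℤ)) * ∑ σ, d σ := by
  rw [Matrix.mul_apply, zpow_neg, zpow_natCast, Finset.mul_sum]
  refine Finset.sum_congr rfl fun σ _ => ?_
  simp only [hadamardUnit, Units.inv_mk, Matrix.mul_diagonal, Matrix.smul_apply, hadamard,
    Matrix.of_apply, walsh_false, walsh_comm σ, smul_eq_mul]
  ring

end Hadamard

section Ising

variable [Fintype V]

lemma pauliXX_eq_of_xor (e : Sym2 V) : pauliXX e = Matrix.of fun x y =>
    if (fun v => xor (x v) (y v)) = (fun v => decide (v ∈ e)) then (1 : ℂ) else 0 := by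
  ext x y
  have hcond : ((∀ w, w ∉ e → x w = y w) ∧ (∀ w ∈ e, x w ≠ y w)) ↔
      ∀ v, xor (x v) (y v) = decide (v ∈ e) := by
    refine ⟨fun ⟨hoff, hon⟩ v => ?_, fun h => ⟨fun w hw => ?_, fun w hw => ?_⟩⟩
    · by_cases hv : v ∈ e
      · simpa [hv] using hon v hv
      · simpa [hv] using hoff v hv
    · simpa [hw] using h w
    · simpa [hw] using h w
  simp only [pauliXX, Matrix.of_apply, hcond, funext_iff]

lemma spinProd_eq_walsh {e : Sym2 V} (he : ¬ e.IsDiag) (σ : V → Bool) :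
    (spinProd σ e : ℂ) = walsh (fun v => decide (v ∈ e)) σ := by
  induction e using Sym2.ind with
  | _ u w =>
  have huw : u ≠ w := by simpa using he
  calc (spinProd σ s(u, w) : ℂ) = boolSign (σ u) * boolSign (σ w) := by
        simp [spinProd, spin_eq_neg_boolSign]
    _ = ∏ v ∈ Finset.univ.filter (· ∈ s(u, w)), boolSign (σ v) := by
        have hpair : Finset.univ.filter (· ∈ s(u, w)) = {u, w} := by ext; simp
        rw [hpair, Finset.prod_pair huw]
    _ = walsh (fun v => decide (v ∈ s(u, w))) σ := by
        rw [Finset.prod_filter]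
        refine Finset.prod_congr rfl fun v _ => ?_
        by_cases hv : v ∈ s(u, w) <;> simp [hv, boolSign]

lemma pauliXX_eq_hadamardUnit_conj {e : Sym2 V} (he : ¬ e.IsDiag) :
    pauliXX e = (hadamardUnit V : Matrix (V → Bool) (V → Bool) ℂ) *
      Matrix.diagonal (fun σ => (spinProd σ e : ℂ)) *
        (↑(hadamardUnit V)⁻¹ : Matrix (V → Bool) (V → Bool) ℂ) := by
  rw [pauliXX_eq_of_xor, funext (spinProd_eq_walsh he)]
  simp only [hadamardUnit, Units.inv_mk, Matrix.mul_smul, hadamard_mul_diagonal_walsh_mul_hadamard,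
    smul_smul, inv_mul_cancel₀ two_pow_card_ne_zero, one_smul]

lemma exp_smul_pauliXX {e : Sym2 V} (he : ¬ e.IsDiag) (c : ℂ) :
    NormedSpace.exp (c • pauliXX e) = (hadamardUnit V : Matrix (V → Bool) (V → Bool) ℂ) *
      Matrix.diagonal (fun σ => Complex.exp (c * (spinProd σ e : ℂ))) *
        (↑(hadamardUnit V)⁻¹ : Matrix (V → Bool) (V → Bool) ℂ) := by
  rw [pauliXX_eq_hadamardUnit_conj he, ← Matrix.smul_mul, ← Matrix.mul_smul,
    ← Matrix.diagonal_smul, Matrix.exp_units_conj, Matrix.exp_diagonal, Pi.exp_def]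
  simp only [Pi.smul_apply, smul_eq_mul, Complex.exp_eq_exp_ℂ]

end Ising

/-- **Reduction used in Theorem 6 of the paper.**
`⟨0^{|V|}| Π_{ε={u,v}∈E} exp(−iθ φ(ε) X_u X_v) |0^{|V|}⟩ = Z_Ising(G; iθ)`
(the operators `X_u X_v` pairwise commute, so the order of the product is
immaterial). -/
theorem amplitude_eq_ising [Fintype V] [LinearOrder Eg] [Fintype Eg]
    (ends : Eg → Sym2 V) (hloop : ∀ e : Eg, ¬ (ends e).IsDiag)
    (φ : Eg → ℝ) (θ : ℝ) :
    (oprod Finset.univ (fun e =>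
        NormedSpace.exp ((-(Complex.I * (θ : ℂ) * (φ e : ℂ))) • pauliXX (ends e))))
        (fun _ => false) (fun _ => false) =
      Zising ends φ (Complex.I * θ) := by
  let d : Eg → (V → Bool) → ℂ := fun e σ =>
    Complex.exp (-(Complex.I * θ * φ e) * (spinProd σ (ends e) : ℂ))
  simp only [oprod, exp_smul_pauliXX (hloop _), list_prod_map_units_conj]
  have hdiag := map_list_prod (Matrix.diagonalRingHom (V → Bool) ℂ)
    ((Finset.univ.sort (· ≤ ·)).map d)
  simp only [List.map_map, Function.comp_def, Matrix.diagonalRingHom_apply] at hdiag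
  rw [← hdiag, hadamardUnit_conj_diagonal_apply_false, list_prod_map_sort, Zising]
  simp only [d, Finset.prod_apply, neg_mul]

end Stmt11
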